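/- arXiv:1412.3518 — 2 statements merged into one kernel-verified Lean document; each statement's English description precedes it below -/
import Mathlib

section
/- In the alternating sequence of models M₀, M₁, M₂, ... (defined below) with context u₁: for all n ≥ 0, M_{n+1} is a conservative extension of M_n; A = 1 is not an actual cause of B = 1 in (M_{2n}, u₁); and A = 1 is an actual cause of B = 1 in (M_{2n+1}, u₁). -/
open Classical

/-- A causal model over variable namespace ℕ (values are also coded as ℕ).
`V` is the finite set of endogenous variables; `F X ctx g` gives the value of the
structural equation for `X` given a context `ctx` (assignment to the exogenous
variables) and an assignment `g` to the endogenous variables. -/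
structure CM where
  V : Finset ℕ
  F : ℕ → (ℕ → ℕ) → (ℕ → ℕ) → ℕ

/-- `v` is a solution of all the structural equations of `M` in context `ctx`
(pinned to `0` outside `V` so that worlds are canonical). -/
def IsSol (M : CM) (ctx v : ℕ → ℕ) : Prop :=
  (∀ X ∈ M.V, v X = M.F X ctx v) ∧ ∀ X, X ∉ M.V → v X = 0

/-- `M` is recursive (acyclic): there is a total order on `V` such that each
equation depends only on strictly earlier endogenous variables. -/
def Recursive (M : CM) : Prop :=
  ∃ ord : ℕ → ℕ, Set.InjOn ord ↑M.V ∧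
    ∀ X ∈ M.V, ∀ ctx g h, (∀ Y ∈ M.V, ord Y < ord X → g Y = h Y) →
      M.F X ctx g = M.F X ctx h

/-- The model obtained by intervening according to the partial assignment `I`. -/
def CM.intervene (M : CM) (I : ℕ → Option ℕ) : CM :=
  ⟨M.V, fun X ctx g => (I X).getD (M.F X ctx g)⟩

/-- The intervention setting the variables in `S` to the values given by `f`. -/
def doSet (S : Finset ℕ) (f : ℕ → ℕ) : ℕ → Option ℕ :=
  fun Y => if Y ∈ S then some (f Y) else none

/-- `(M, ctx) ⊨ [I](X = x)`. -/
def Sat (M : CM) (ctx : ℕ → ℕ) (I : ℕ → Option ℕ) (X x : ℕ) : Prop :=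
  ∀ v, IsSol (M.intervene I) ctx v → v X = x

/-- Boolean combinations of primitive events `X = x`. -/
inductive BForm where
  | prim : ℕ → ℕ → BForm
  | not : BForm → BForm
  | and : BForm → BForm → BForm

def BForm.eval (v : ℕ → ℕ) : BForm → Prop
  | .prim X x => v X = x
  | .not φ => ¬ BForm.eval v φ
  | .and φ ψ => BForm.eval v φ ∧ BForm.eval v ψ

def BForm.vars : BForm → Finset ℕ
  | .prim X _ => {X}
  | .not φ => φ.vars
  | .and φ ψ => φ.vars ∪ ψ.vars

/-- `(M, ctx) ⊨ [I]φ`. -/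
def SatF (M : CM) (ctx : ℕ → ℕ) (I : ℕ → Option ℕ) (φ : BForm) : Prop :=
  ∀ v, IsSol (M.intervene I) ctx v → φ.eval v

/-- `M'` is a conservative extension of `M`: same exogenous variables (shared
namespace), `M.V ⊆ M'.V`, and for every context, every `X ∈ M.V`, and every
setting of the other variables of `M`, the intervened value of `X` agrees. -/
def ConsExt (M M' : CM) : Prop :=
  M.V ⊆ M'.V ∧
  ∀ ctx x, ∀ X ∈ M.V, ∀ w : ℕ → ℕ,
    (Sat M ctx (doSet (M.V.erase X) w) X x ↔ Sat M' ctx (doSet (M.V.erase X) w) X x)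

/-- The intervention `X⃗ ← x⃗', W⃗ ← w⃗` used in AC2(a). -/
def witI (Xs : Finset ℕ) (x' : ℕ → ℕ) (W : Finset ℕ) (w : ℕ → ℕ) : ℕ → Option ℕ :=
  fun Y => if Y ∈ Xs then some (x' Y) else if Y ∈ W then some (w Y) else none

/-- The intervention `X⃗ ← x⃗, Z⃗' ← z⃗, W⃗' ← w⃗` used in AC2(b) (here `vs` is the
actual solution, providing the actual values `z⃗`). -/
def acbI (Xs : Finset ℕ) (xv : ℕ → ℕ) (Z' : Finset ℕ) (vs : ℕ → ℕ)
    (W' : Finset ℕ) (w : ℕ → ℕ) : ℕ → Option ℕ :=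
  fun Y => if Y ∈ Xs then some (xv Y) else if Y ∈ Z' then some (vs Y)
    else if Y ∈ W' then some (w Y) else none

/-- `(W, w, x')` is a witness for AC2 (updated version, with AC2(b)). -/
def Wit (M : CM) (ctx : ℕ → ℕ) (Xs : Finset ℕ) (xv : ℕ → ℕ) (φ : BForm)
    (W : Finset ℕ) (w x' : ℕ → ℕ) : Prop :=
  W ⊆ M.V ∧ Xs ⊆ M.V \ W ∧
  SatF M ctx (witI Xs x' W w) (BForm.not φ) ∧
  ∀ vs, IsSol M ctx vs → ∀ W' ⊆ W, ∀ Z' ⊆ M.V \ W,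
    SatF M ctx (acbI Xs xv Z' vs W' w) φ

/-- `(W, w, x')` is a witness for AC2 in the original HP sense (with AC2(b'):
only `W` itself, not its subsets, is set to `w`). -/
def Wit' (M : CM) (ctx : ℕ → ℕ) (Xs : Finset ℕ) (xv : ℕ → ℕ) (φ : BForm)
    (W : Finset ℕ) (w x' : ℕ → ℕ) : Prop :=
  W ⊆ M.V ∧ Xs ⊆ M.V \ W ∧
  SatF M ctx (witI Xs x' W w) (BForm.not φ) ∧
  ∀ vs, IsSol M ctx vs → ∀ Z' ⊆ M.V \ W,
    SatF M ctx (acbI Xs xv Z' vs W w) φ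

/-- AC1: `X⃗ = x⃗` and `φ` hold in the actual world. -/
def AC1 (M : CM) (ctx : ℕ → ℕ) (Xs : Finset ℕ) (xv : ℕ → ℕ) (φ : BForm) : Prop :=
  ∀ v, IsSol M ctx v → (∀ X ∈ Xs, v X = xv X) ∧ φ.eval v

def PreCause (M : CM) (ctx : ℕ → ℕ) (Xs : Finset ℕ) (xv : ℕ → ℕ) (φ : BForm) : Prop :=
  AC1 M ctx Xs xv φ ∧ ∃ W w x', Wit M ctx Xs xv φ W w x'

/-- The (updated) HP definition of actual cause: AC1 ∧ AC2 ∧ AC3. -/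
def IsCause (M : CM) (ctx : ℕ → ℕ) (Xs : Finset ℕ) (xv : ℕ → ℕ) (φ : BForm) : Prop :=
  PreCause M ctx Xs xv φ ∧ ∀ Xs' ⊂ Xs, ¬ PreCause M ctx Xs' xv φ

def PreCause' (M : CM) (ctx : ℕ → ℕ) (Xs : Finset ℕ) (xv : ℕ → ℕ) (φ : BForm) : Prop :=
  AC1 M ctx Xs xv φ ∧ ∃ W w x', Wit' M ctx Xs xv φ W w x'

/-- The original HP definition of actual cause (with AC2(b')). -/
def IsCause' (M : CM) (ctx : ℕ → ℕ) (Xs : Finset ℕ) (xv : ℕ → ℕ) (φ : BForm) : Prop :=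
  PreCause' M ctx Xs xv φ ∧ ∀ Xs' ⊂ Xs, ¬ PreCause' M ctx Xs' xv φ

/-- An extended causal model: a causal model with a normality preorder on worlds. -/
structure ECM extends CM where
  normGE : (ℕ → ℕ) → (ℕ → ℕ) → Prop
  normGE_refl : ∀ s, normGE s s
  normGE_trans : ∀ s t u, normGE s t → normGE t u → normGE s u

/-- A world of `M`: an assignment to the endogenous variables (canonically `0` elsewhere). -/
def World (M : CM) (s : ℕ → ℕ) : Prop := ∀ X, X ∉ M.V → s X = 0

/-- The world determined by the intervention `I` in context `ctx` is at least as
normal as the actual world `s_ctx`. -/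
def NormAbove (M : ECM) (ctx : ℕ → ℕ) (I : ℕ → Option ℕ) : Prop :=
  ∀ s su, IsSol (M.toCM.intervene I) ctx s → IsSol M.toCM ctx su → M.normGE s su

/-- Witness for the extended HP definition: AC2 together with AC2(a⁺). -/
def EWit (M : ECM) (ctx : ℕ → ℕ) (Xs : Finset ℕ) (xv : ℕ → ℕ) (φ : BForm)
    (W : Finset ℕ) (w x' : ℕ → ℕ) : Prop :=
  Wit M.toCM ctx Xs xv φ W w x' ∧ NormAbove M ctx (witI Xs x' W w)

def EPreCause (M : ECM) (ctx : ℕ → ℕ) (Xs : Finset ℕ) (xv : ℕ → ℕ) (φ : BForm) : Prop :=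
  AC1 M.toCM ctx Xs xv φ ∧ ∃ W w x', EWit M ctx Xs xv φ W w x'

/-- The extended (normality-sensitive) HP definition of actual cause. -/
def EIsCause (M : ECM) (ctx : ℕ → ℕ) (Xs : Finset ℕ) (xv : ℕ → ℕ) (φ : BForm) : Prop :=
  EPreCause M ctx Xs xv φ ∧ ∀ Xs' ⊂ Xs, ¬ EPreCause M ctx Xs' xv φ

/-- In world `s`, variable `v0` takes on a value other than that specified by
the equations of `M` in context `ctx`. -/
def Deviates (M : CM) (ctx : ℕ → ℕ) (v0 : ℕ) (s : ℕ → ℕ) : Prop :=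
  ∀ v, IsSol (M.intervene (doSet (M.V.erase v0) s)) ctx v → v v0 ≠ s v0

/-- `(M, ctx)` respects the equations for `v0`: any world in which `v0` deviates
from its equation-determined value is not at least as normal as the actual world. -/
def Respects (M : ECM) (ctx : ℕ → ℕ) (v0 : ℕ) : Prop :=
  ∀ s, World M.toCM s → Deviates M.toCM ctx v0 s →
    ∀ su, IsSol M.toCM ctx su → ¬ M.normGE s su

/-- Conservative extension of extended causal models: conservative extension of
the underlying models plus condition CE on the normality preorders. -/
def EConsExt (M M' : ECM) : Prop :=
  ConsExt M.toCM M'.toCM ∧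
  ∀ ctx (W : Finset ℕ), W ⊆ M.V → ∀ w : ℕ → ℕ,
    (NormAbove M ctx (doSet W w) ↔ NormAbove M' ctx (doSet W w))

/-- Indicator of a proposition, used to express Boolean structural equations. -/
noncomputable def bI (p : Prop) : ℕ := if p then 1 else 0

/-- Structural equations of the alternating models: A = 0, B = 1, X_j = 2j,
Y_j = 2j + 1; there are `nX` X-variables and `nY` Y-variables (nY = nX for even
models M_{2nX}, nY = nX - 1 for odd models M_{2nY+1}). A and the X_j are set by
the exogenous variable; Y_j = X_j; B is 1 in context u₁ unless (a) A = 0 and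
(X_{nX} = 0 when nY < nX, or X_j = Y_j = 0 for some j ≤ nY), or (b) A = 1 and
X_j ≠ Y_j for some j ≤ nY; and B = 0 in context u₀. -/
noncomputable def Fseq (nX nY : ℕ) : ℕ → (ℕ → ℕ) → (ℕ → ℕ) → ℕ :=
  fun X ctx g =>
    if X = 1 then
      (if ctx 0 = 0 then 0 else
        bI (¬ ((g 0 = 0 ∧ ((nY < nX ∧ g (2 * nX) = 0) ∨
                  ∃ j ∈ Finset.Icc 1 nY, g (2 * j) = 0 ∧ g (2 * j + 1) = 0)) ∨
               (g 0 = 1 ∧ ∃ j ∈ Finset.Icc 1 nY, g (2 * j) ≠ g (2 * j + 1)))))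
    else if X % 2 = 0 then ctx 0
    else g (X - 1)

def Vseq (nX nY : ℕ) : Finset ℕ :=
  {0, 1} ∪ (Finset.Icc 1 nX).image (fun j => 2 * j) ∪
    (Finset.Icc 1 nY).image (fun j => 2 * j + 1)

/-- The model M_{2n}. -/
noncomputable def Meven (n : ℕ) : CM := ⟨Vseq n n, Fseq n n⟩

/-- The model M_{2n+1}. -/
noncomputable def Modd (n : ℕ) : CM := ⟨Vseq (n + 1) n, Fseq (n + 1) n⟩

/-!
The alternating models are recursive, so every intervention has exactly one solution, which
can be written down (`altSol`); every claim reduces to evaluating it. Adding `X_{n+1}` or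
`Y_{n+1}` changes no old equation as long as the new variable is not intervened on: it then
copies the context (so `X_{n+1} ≠ 0` whenever `B` can be `1`), resp. `X_{n+1}`.

In `M_{2n+1}` the new variable `X_{n+1}` provides a contingency under which `B` depends on `A`;
in `M_{2n}` none does, because AC2(b) can freeze the two members of each pair `X_j, Y_j`
independently.
-/

section Intervention

variable {M : CM} {ctx : ℕ → ℕ}

theorem IsSol.apply_eq_of_intervene {I : ℕ → Option ℕ} {v : ℕ → ℕ} {X a : ℕ}
    (hv : IsSol (M.intervene I) ctx v) (hX : X ∈ M.V) (hI : I X = some a) : v X = a := by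
  simpa [CM.intervene, hI] using hv.1 X hX

theorem acbI_empty_eq_witI (xv vs x' : ℕ → ℕ) (W : Finset ℕ) (w : ℕ → ℕ) :
    acbI ∅ xv ∅ vs W w = witI ∅ x' W w := by
  funext Y; simp [acbI, witI]

/-- With the empty set of candidate causes, AC2(a) and AC2(b) make contradictory claims
about one and the same intervention. -/
theorem not_preCause_empty (hM : ∀ I, ∃ v, IsSol (M.intervene I) ctx v) (xv : ℕ → ℕ)
    (φ : BForm) : ¬ PreCause M ctx ∅ xv φ := by
  rintro ⟨-, W, w, x', -, -, hnot, hφ⟩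
  obtain ⟨vs, hvs⟩ := hM fun _ => none
  obtain ⟨v, hv⟩ := hM (witI ∅ x' W w)
  have hφv := hφ vs hvs W subset_rfl ∅ (Finset.empty_subset _)
  rw [acbI_empty_eq_witI xv vs x'] at hφv
  exact hnot v hv (hφv v hv)

theorem isCause_singleton_iff (hM : ∀ I, ∃ v, IsSol (M.intervene I) ctx v) {X : ℕ}
    {xv : ℕ → ℕ} {φ : BForm} : IsCause M ctx {X} xv φ ↔ PreCause M ctx {X} xv φ := by
  refine ⟨And.left, fun h => ⟨h, fun Xs' hXs' => ?_⟩⟩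
  rw [Finset.ssubset_singleton_iff.mp hXs']
  exact not_preCause_empty hM xv φ

theorem Wit.not_mem_of_prim (hM : ∀ I, ∃ v, IsSol (M.intervene I) ctx v) {Xs : Finset ℕ}
    {xv : ℕ → ℕ} {B b : ℕ} {W : Finset ℕ} {w x' : ℕ → ℕ}
    (h : Wit M ctx Xs xv (.prim B b) W w x') (hB : B ∉ Xs) : B ∉ W := by
  obtain ⟨hW, -, hnot, hφ⟩ := h
  intro hBW
  obtain ⟨vs, hvs⟩ := hM fun _ => none
  obtain ⟨v, hv⟩ := hM (witI Xs x' W w)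
  obtain ⟨v', hv'⟩ := hM (acbI Xs xv ∅ vs W w)
  have hvB : v B = w B := hv.apply_eq_of_intervene (hW hBW) (by simp [witI, hB, hBW])
  have hv'B : v' B = w B := hv'.apply_eq_of_intervene (hW hBW) (by simp [acbI, hB, hBW])
  have hv'φ := hφ vs hvs W subset_rfl ∅ (Finset.empty_subset _) v' hv'
  exact hnot v hv (hvB.trans (hv'B.symm.trans hv'φ))

end Intervention

noncomputable def altModel (nX nY : ℕ) : CM := ⟨Vseq nX nY, Fseq nX nY⟩

theorem Meven_eq (n : ℕ) : Meven n = altModel n n := rfl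

theorem Modd_eq (n : ℕ) : Modd n = altModel (n + 1) n := rfl

/-- The exceptions (a) and (b) under which `B` is `0` in context `u₁`. -/
def BBlocked (nX nY : ℕ) (g : ℕ → ℕ) : Prop :=
  (g 0 = 0 ∧ ((nY < nX ∧ g (2 * nX) = 0) ∨
      ∃ j ∈ Finset.Icc 1 nY, g (2 * j) = 0 ∧ g (2 * j + 1) = 0)) ∨
  (g 0 = 1 ∧ ∃ j ∈ Finset.Icc 1 nY, g (2 * j) ≠ g (2 * j + 1))

theorem bI_eq_one {p : Prop} : bI p = 1 ↔ p := by
  by_cases h : p <;> simp [bI, h]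

theorem Fseq_one (nX nY : ℕ) (c g : ℕ → ℕ) :
    Fseq nX nY 1 c g = if c 0 = 0 then 0 else bI (¬ BBlocked nX nY g) := rfl

theorem Fseq_of_even {nX nY X : ℕ} (h : X % 2 = 0) (c g : ℕ → ℕ) :
    Fseq nX nY X c g = c 0 := by
  simp [Fseq, show X ≠ 1 by omega, h]

theorem Fseq_of_odd {nX nY X : ℕ} (h : X % 2 = 1) (h1 : X ≠ 1) (c g : ℕ → ℕ) :
    Fseq nX nY X c g = g (X - 1) := by
  simp [Fseq, h1, show X % 2 ≠ 0 by omega]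

theorem mem_Vseq {nX nY X : ℕ} :
    X ∈ Vseq nX nY ↔ (X % 2 = 0 ∧ X ≤ 2 * nX) ∨ (X % 2 = 1 ∧ X ≤ 2 * nY + 1) := by
  simp only [Vseq, Finset.mem_union, Finset.mem_insert, Finset.mem_singleton,
    Finset.mem_image, Finset.mem_Icc]
  constructor
  · rintro ((h | h) | ⟨j, ⟨h1, h2⟩, rfl⟩ | ⟨j, ⟨h1, h2⟩, rfl⟩) <;> omega
  · rintro (⟨h1, h2⟩ | ⟨h1, h2⟩)
    · rcases Nat.eq_zero_or_pos X with h0 | h0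
      · exact Or.inl (Or.inl (Or.inl h0))
      · exact Or.inl (Or.inr ⟨X / 2, ⟨by omega, by omega⟩, by omega⟩)
    · by_cases h1' : X = 1
      · exact Or.inl (Or.inl (Or.inr h1'))
      · exact Or.inr ⟨X / 2, ⟨by omega, by omega⟩, by omega⟩

theorem one_mem_Vseq {nX nY : ℕ} : 1 ∈ Vseq nX nY := mem_Vseq.mpr (Or.inr ⟨rfl, by omega⟩)

theorem BBlocked_congr {nX nY : ℕ} (hle : nY ≤ nX) {g h : ℕ → ℕ}
    (hgh : ∀ Y ∈ Vseq nX nY, Y ≠ 1 → g Y = h Y) : BBlocked nX nY g ↔ BBlocked nX nY h := by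
  have hX : ∀ j ≤ nX, g (2 * j) = h (2 * j) := fun j hj =>
    hgh _ (mem_Vseq.mpr (Or.inl ⟨by omega, by omega⟩)) (by omega)
  have hY : ∀ j ∈ Finset.Icc 1 nY, g (2 * j + 1) = h (2 * j + 1) := fun j hj => by
    rw [Finset.mem_Icc] at hj
    exact hgh _ (mem_Vseq.mpr (Or.inr ⟨by omega, by omega⟩)) (by omega)
  have hX' : ∀ j ∈ Finset.Icc 1 nY, g (2 * j) = h (2 * j) := fun j hj =>
    hX j (by rw [Finset.mem_Icc] at hj; omega)
  unfold BBlocked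
  rw [show g 0 = h 0 from hX 0 (Nat.zero_le _), hX nX le_rfl]
  refine or_congr (and_congr_right' (or_congr_right (exists_congr fun j => and_congr_right
    fun hj => ?_))) (and_congr_right' (exists_congr fun j => and_congr_right fun hj => ?_)) <;>
  rw [hX' j hj, hY j hj]

section Solutions

variable {nX nY : ℕ} {I : ℕ → Option ℕ} {c : ℕ → ℕ}

/-- The values of the variables other than `B` under the intervention `I` (junk outside the
model); `altSol` then adds `B`. -/
noncomputable def preSol (I : ℕ → Option ℕ) (c : ℕ → ℕ) (X : ℕ) : ℕ :=
  if X % 2 = 0 then (I X).getD (c 0) else (I X).getD ((I (X - 1)).getD (c 0))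

noncomputable def altSol (nX nY : ℕ) (I : ℕ → Option ℕ) (c : ℕ → ℕ) (X : ℕ) : ℕ :=
  if X ∈ Vseq nX nY then
    (if X = 1 then (I 1).getD (Fseq nX nY 1 c (preSol I c)) else preSol I c X)
  else 0

theorem preSol_of_even {X : ℕ} (h : X % 2 = 0) : preSol I c X = (I X).getD (c 0) := by
  rw [preSol, if_pos h]

theorem preSol_of_odd {X : ℕ} (h : X % 2 = 1) :
    preSol I c X = (I X).getD (preSol I c (X - 1)) := by
  rw [preSol, if_neg (by omega), preSol_of_even (by omega)]

theorem altSol_one : altSol nX nY I c 1 = (I 1).getD (Fseq nX nY 1 c (preSol I c)) := by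
  rw [altSol, if_pos one_mem_Vseq, if_pos rfl]

theorem altSol_of_ne_one {X : ℕ} (hX : X ∈ Vseq nX nY) (h1 : X ≠ 1) :
    altSol nX nY I c X = preSol I c X := by
  rw [altSol, if_pos hX, if_neg h1]

theorem Fseq_one_congr (hle : nY ≤ nX) {g h : ℕ → ℕ}
    (hgh : ∀ Y ∈ Vseq nX nY, Y ≠ 1 → g Y = h Y) : Fseq nX nY 1 c g = Fseq nX nY 1 c h := by
  rw [Fseq_one, Fseq_one, BBlocked_congr hle hgh]

theorem IsSol.eq_preSol (hle : nY ≤ nX) {v : ℕ → ℕ}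
    (hv : IsSol ((altModel nX nY).intervene I) c v) {X : ℕ} (hX : X ∈ Vseq nX nY) (h1 : X ≠ 1) :
    v X = preSol I c X := by
  have heq : ∀ Y ∈ Vseq nX nY, v Y = (I Y).getD (Fseq nX nY Y c v) := hv.1
  rcases Nat.mod_two_eq_zero_or_one X with he | ho
  · rw [heq X hX, Fseq_of_even he, preSol_of_even he]
  · have hprev : X - 1 ∈ Vseq nX nY := mem_Vseq.mpr (Or.inl (by rw [mem_Vseq] at hX; omega))
    rw [heq X hX, Fseq_of_odd ho h1, heq _ hprev, Fseq_of_even (by omega), preSol_of_odd ho,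
      preSol_of_even (by omega)]

theorem isSol_altSol (hle : nY ≤ nX) :
    IsSol ((altModel nX nY).intervene I) c (altSol nX nY I c) := by
  refine ⟨fun X (hX : X ∈ Vseq nX nY) => ?_, fun X (hX : X ∉ Vseq nX nY) => by
    rw [altSol, if_neg hX]⟩
  change altSol nX nY I c X = (I X).getD (Fseq nX nY X c (altSol nX nY I c))
  by_cases h1 : X = 1
  · subst h1
    rw [altSol_one, Fseq_one_congr hle fun Y hY hY1 => (altSol_of_ne_one hY hY1).symm]
  rcases Nat.mod_two_eq_zero_or_one X with he | ho
  · rw [altSol_of_ne_one hX h1, Fseq_of_even he, preSol_of_even he]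
  · have hprev : X - 1 ∈ Vseq nX nY := mem_Vseq.mpr (Or.inl (by rw [mem_Vseq] at hX; omega))
    rw [altSol_of_ne_one hX h1, Fseq_of_odd ho h1, altSol_of_ne_one hprev (by omega),
      preSol_of_odd ho]

theorem isSol_altModel_iff (hle : nY ≤ nX) {v : ℕ → ℕ} :
    IsSol ((altModel nX nY).intervene I) c v ↔ v = altSol nX nY I c := by
  refine ⟨fun hv => funext fun X => ?_, fun h => h ▸ isSol_altSol hle⟩
  by_cases hX : X ∈ Vseq nX nY
  · by_cases h1 : X = 1
    · subst h1
      have hB : v 1 = (I 1).getD (Fseq nX nY 1 c v) := hv.1 1 hX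
      rw [hB, altSol_one, Fseq_one_congr hle fun Y hY hY1 => hv.eq_preSol hle hY hY1]
    · rw [hv.eq_preSol hle hX h1, altSol_of_ne_one hX h1]
  · rw [hv.2 X hX, altSol, if_neg hX]

theorem altModel_solvable (hle : nY ≤ nX) (I : ℕ → Option ℕ) :
    ∃ v, IsSol ((altModel nX nY).intervene I) c v :=
  ⟨_, isSol_altSol hle⟩

theorem satF_altModel_iff (hle : nY ≤ nX) {φ : BForm} :
    SatF (altModel nX nY) c I φ ↔ φ.eval (altSol nX nY I c) :=
  ⟨fun h => h _ (isSol_altSol hle), fun h _ hv => (isSol_altModel_iff hle).mp hv ▸ h⟩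

theorem sat_altModel_iff (hle : nY ≤ nX) {X x : ℕ} :
    Sat (altModel nX nY) c I X x ↔ altSol nX nY I c X = x :=
  satF_altModel_iff hle (φ := .prim X x)

end Solutions

theorem consExt_altModel {nX nY nX' nY' : ℕ} (hle : nY ≤ nX) (hle' : nY' ≤ nX')
    (hV : Vseq nX nY ⊆ Vseq nX' nY')
    (hB : ∀ (c : ℕ → ℕ) (I : ℕ → Option ℕ), c 0 ≠ 0 → (∀ Y ∉ Vseq nX nY, I Y = none) →
      (BBlocked nX nY (preSol I c) ↔ BBlocked nX' nY' (preSol I c))) :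
    ConsExt (altModel nX nY) (altModel nX' nY') := by
  refine ⟨hV, fun c x X (hX : X ∈ Vseq nX nY) w => ?_⟩
  rw [sat_altModel_iff hle, sat_altModel_iff hle']
  by_cases h1 : X = 1
  · subst h1
    have hI : ∀ Y ∉ Vseq nX nY, doSet ((altModel nX nY).V.erase 1) w Y = none := fun Y hY =>
      if_neg fun h => hY (Finset.mem_of_mem_erase h)
    rw [altSol_one, altSol_one, Fseq_one, Fseq_one]
    split_ifs with hc
    · rfl
    · rw [hB c _ hc hI]
  · rw [altSol_of_ne_one hX h1, altSol_of_ne_one (hV hX) h1]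

theorem exists_mem_Icc_one_succ {P : ℕ → Prop} (n : ℕ) :
    (∃ j ∈ Finset.Icc 1 (n + 1), P j) ↔ (∃ j ∈ Finset.Icc 1 n, P j) ∨ P (n + 1) := by
  simp only [Finset.mem_Icc]
  constructor
  · rintro ⟨j, ⟨h1, h2⟩, hj⟩
    rcases Nat.lt_or_eq_of_le h2 with h | rfl
    · exact Or.inl ⟨j, ⟨h1, by omega⟩, hj⟩
    · exact Or.inr hj
  · rintro (⟨j, ⟨h1, h2⟩, hj⟩ | h)
    · exact ⟨j, ⟨h1, by omega⟩, hj⟩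
    · exact ⟨n + 1, ⟨by omega, le_rfl⟩, h⟩

theorem BBlocked_self_iff {n : ℕ} {g : ℕ → ℕ} (h : g (2 * (n + 1)) ≠ 0) :
    BBlocked n n g ↔ BBlocked (n + 1) n g := by
  simp [BBlocked, h]

theorem BBlocked_succ_iff {n : ℕ} {g : ℕ → ℕ} (h : g (2 * (n + 1) + 1) = g (2 * (n + 1))) :
    BBlocked (n + 1) n g ↔ BBlocked (n + 1) (n + 1) g := by
  simp only [BBlocked, exists_mem_Icc_one_succ, h, and_self, ne_eq, not_true_eq_false, or_false,
    Nat.lt_add_one, true_and, lt_self_iff_false, false_and, false_or]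
  exact or_congr_left (and_congr_right' or_comm)

theorem consExt_Meven_Modd (n : ℕ) : ConsExt (Meven n) (Modd n) :=
  consExt_altModel le_rfl (Nat.le_succ n) (fun X => by simp only [mem_Vseq]; omega)
    fun c I hc hI => BBlocked_self_iff <| by
      rwa [preSol_of_even (by omega), hI _ (by simp only [mem_Vseq]; omega), Option.getD_none]

theorem consExt_Modd_Meven (n : ℕ) : ConsExt (Modd n) (Meven (n + 1)) :=
  consExt_altModel (Nat.le_succ n) le_rfl (fun X => by simp only [mem_Vseq]; omega)
    fun c I _ hI => BBlocked_succ_iff <| by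
      rw [preSol_of_odd (by omega), hI _ (by simp only [mem_Vseq]; omega), Option.getD_none,
        Nat.add_sub_cancel]

section ActualCausation

variable {nX nY : ℕ}

theorem altSol_actual {X : ℕ} (hX : X ∈ Vseq nX nY) :
    altSol nX nY (fun _ => none) (fun _ => 1) X = 1 := by
  have hpre : preSol (fun _ => none) (fun _ => 1) = fun _ => 1 := by
    funext Y; rw [preSol]; split <;> rfl
  by_cases h1 : X = 1
  · subst h1
    rw [altSol_one, Option.getD_none, hpre, Fseq_one, if_neg one_ne_zero, bI_eq_one, BBlocked]
    simp
  · rw [altSol_of_ne_one hX h1, hpre]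

theorem altSol_one_eq_one_iff {I : ℕ → Option ℕ} (hI : I 1 = none) :
    altSol nX nY I (fun _ => 1) 1 = 1 ↔ ¬ BBlocked nX nY (preSol I (fun _ => 1)) := by
  rw [altSol_one, hI, Option.getD_none, Fseq_one, if_neg one_ne_zero, bI_eq_one]

theorem ac1_altModel (hle : nY ≤ nX) :
    AC1 (altModel nX nY) (fun _ => 1) {0} (fun _ => 1) (.prim 1 1) := by
  intro v hv
  rw [(isSol_altModel_iff hle (I := fun _ => none)).mp hv]
  exact ⟨fun X hX => by
    rw [Finset.mem_singleton.mp hX, altSol_actual (mem_Vseq.mpr (Or.inl ⟨rfl, by omega⟩))],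
    altSol_actual one_mem_Vseq⟩

theorem preSol_acbI_eq_one {n : ℕ} {Z' W' : Finset ℕ} {w : ℕ → ℕ} (hW' : W' ⊆ {2 * (n + 1)})
    (hZ' : Z' ⊆ Vseq (n + 1) n) {Y : ℕ} (hY : Y ∈ Vseq (n + 1) n) (hYn : Y ≠ 2 * (n + 1)) :
    preSol (acbI {0} (fun _ => 1) Z' (altSol (n + 1) n (fun _ => none) (fun _ => 1)) W' w)
      (fun _ => 1) Y = 1 := by
  set J := acbI {0} (fun _ => 1) Z' (altSol (n + 1) n (fun _ => none) (fun _ => 1)) W' w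
  have hJ : ∀ Y ∈ Vseq (n + 1) n, Y ≠ 2 * (n + 1) → (J Y).getD 1 = 1 := by
    intro Y hY hYn
    have hYW : Y ∉ W' := fun h => hYn (Finset.mem_singleton.mp (hW' h))
    simp only [J, acbI, hYW, if_false]
    split_ifs with h0 hZ
    · rfl
    · exact altSol_actual (hZ' hZ)
    · rfl
  rcases Nat.mod_two_eq_zero_or_one Y with he | ho
  · rw [preSol_of_even he, hJ Y hY hYn]
  · have hY' := mem_Vseq.mp hY
    rw [preSol_of_odd ho, preSol_of_even (by omega),
      hJ _ (mem_Vseq.mpr (Or.inl (by omega))) (by omega), hJ Y hY hYn]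

/-- Setting `A = 0` and `X_{n+1} = 0` blocks `B` through exception (a), while with `A = 1`
every pair `X_j, Y_j` with `j ≤ n` keeps its common actual value `1`, whatever is frozen. -/
theorem preCause_Modd (n : ℕ) :
    PreCause (Modd n) (fun _ => 1) {0} (fun _ => 1) (.prim 1 1) := by
  have hle := Nat.le_succ n
  have hXn : 2 * (n + 1) ∈ Vseq (n + 1) n := mem_Vseq.mpr (Or.inl ⟨by omega, le_rfl⟩)
  rw [Modd_eq]
  refine ⟨ac1_altModel hle, {2 * (n + 1)}, fun _ => 0, fun _ => 0,
    Finset.singleton_subset_iff.mpr hXn, Finset.singleton_subset_iff.mpr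
      (Finset.mem_sdiff.mpr ⟨mem_Vseq.mpr (Or.inl ⟨rfl, by omega⟩), by simp⟩), ?_, ?_⟩
  · rw [satF_altModel_iff hle, BForm.eval, BForm.eval,
      altSol_one_eq_one_iff (by simp [witI]; omega), not_not]
    exact Or.inl ⟨by simp [preSol, witI], Or.inl ⟨lt_add_one n, by simp [preSol, witI]⟩⟩
  intro vs hvs W' hW' Z' hZ'
  rw [(isSol_altModel_iff hle (I := fun _ => none)).mp hvs, satF_altModel_iff hle, BForm.eval]
  have hpre := fun Y hY hYn =>
    preSol_acbI_eq_one (w := fun _ => 0) hW' (hZ'.trans Finset.sdiff_subset) (Y := Y) hY hYn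
  by_cases h1Z : 1 ∈ Z'
  · simp [altSol_one, acbI, h1Z, altSol_actual one_mem_Vseq]
  have h1W : 1 ∉ W' := fun h => by have := Finset.mem_singleton.mp (hW' h); omega
  rw [altSol_one_eq_one_iff (by simp [acbI, h1Z, h1W])]
  rintro (⟨h0, -⟩ | ⟨-, j, hj, hne⟩)
  · rw [hpre 0 (mem_Vseq.mpr (Or.inl ⟨rfl, by omega⟩)) (by omega)] at h0
    exact one_ne_zero h0
  · rw [Finset.mem_Icc] at hj
    rw [hpre _ (mem_Vseq.mpr (Or.inl ⟨by omega, by omega⟩)) (by omega),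
      hpre _ (mem_Vseq.mpr (Or.inr ⟨by omega, by omega⟩)) (by omega)] at hne
    exact hne rfl

theorem isCause_Modd (n : ℕ) : IsCause (Modd n) (fun _ => 1) {0} (fun _ => 1) (.prim 1 1) :=
  (isCause_singleton_iff (altModel_solvable (Nat.le_succ n))).mpr (preCause_Modd n)

theorem exists_pair_of_BBlocked_self {n : ℕ} {g : ℕ → ℕ} (h : BBlocked n n g) :
    ∃ j ∈ Finset.Icc 1 n, (g (2 * j) = 0 ∧ g (2 * j + 1) = 0) ∨ g (2 * j) ≠ g (2 * j + 1) := by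
  rcases h with ⟨-, ⟨hlt, -⟩ | ⟨j, hj, h⟩⟩ | ⟨-, j, hj, h⟩
  · exact absurd hlt (lt_irrefl n)
  · exact ⟨j, hj, Or.inl h⟩
  · exact ⟨j, hj, Or.inr h⟩

/-- AC2(b) keeps `A = 1`, so exception (b) must not fire: every pair `X_j, Y_j` agrees. -/
theorem Wit.preSol_acbI_pair_eq (hle : nY ≤ nX) {W : Finset ℕ} {w x' : ℕ → ℕ}
    (h : Wit (altModel nX nY) (fun _ => 1) {0} (fun _ => 1) (.prim 1 1) W w x') (h1W : 1 ∉ W)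
    {W' Z' : Finset ℕ} (hW' : W' ⊆ W) (hZ' : Z' ⊆ Vseq nX nY \ W) (h1Z' : 1 ∉ Z') {j : ℕ}
    (hj : j ∈ Finset.Icc 1 nY) :
    let p := preSol (acbI {0} (fun _ => 1) Z' (altSol nX nY (fun _ => none) (fun _ => 1)) W' w)
      (fun _ => 1)
    p (2 * j) = p (2 * j + 1) := by
  intro p
  have h1W' : 1 ∉ W' := fun h => h1W (hW' h)
  have hφ := (satF_altModel_iff hle).mp
    (h.2.2.2 _ (isSol_altSol (I := fun _ => none) hle) W' hW' Z' hZ')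
  rw [BForm.eval, altSol_one_eq_one_iff (by simp [acbI, h1Z', h1W'])] at hφ
  by_contra hne
  exact hφ (Or.inr ⟨by simp [preSol, acbI], j, hj, hne⟩)

/-- A witness must set some pair `X_j, Y_j` to `0, 0` or to unequal values; but AC2(b) lets us
freeze each of `X_j`, `Y_j` separately to its witness value or to its actual value `1`, and the
pair must always agree, so the witness values are all `1`. -/
theorem not_preCause_Meven (n : ℕ) :
    ¬ PreCause (Meven n) (fun _ => 1) {0} (fun _ => 1) (.prim 1 1) := by
  rw [Meven_eq]
  rintro ⟨-, W, w, x', hWit⟩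
  have h1W : 1 ∉ W := hWit.not_mem_of_prim (altModel_solvable le_rfl) (by simp)
  have hblocked := (satF_altModel_iff le_rfl).mp hWit.2.2.1
  rw [BForm.eval, BForm.eval, altSol_one_eq_one_iff (by simp [witI, h1W]), not_not] at hblocked
  obtain ⟨j, hj, hpair⟩ := exists_pair_of_BBlocked_self hblocked
  have hj' := Finset.mem_Icc.mp hj
  have hYV : 2 * j + 1 ∈ Vseq n n := mem_Vseq.mpr (Or.inr ⟨by omega, by omega⟩)
  have hne0 : 2 * j ≠ 0 := by omega
  have hY : 2 * j + 1 ∈ W → w (2 * j + 1) = 1 := fun hYW => by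
    have := hWit.preSol_acbI_pair_eq le_rfl h1W (W' := {2 * j + 1}) (by simpa)
      (Finset.empty_subset _) (by simp) hj
    simpa [preSol, acbI, hne0, eq_comm] using this
  have hXY : 2 * j ∈ W → 2 * j + 1 ∈ W → w (2 * j) = w (2 * j + 1) := fun hXW hYW => by
    have := hWit.preSol_acbI_pair_eq le_rfl h1W (W' := {2 * j, 2 * j + 1})
      (Finset.insert_subset hXW (by simpa)) (Finset.empty_subset _) (by simp) hj
    simpa [preSol, acbI, hne0] using this
  have hX : 2 * j ∈ W → 2 * j + 1 ∉ W → w (2 * j) = 1 := fun hXW hYW => by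
    have := hWit.preSol_acbI_pair_eq le_rfl h1W (W' := {2 * j}) (Z' := {2 * j + 1}) (by simpa)
      (by simpa [hYV]) (by simp; omega) hj
    simpa [preSol, acbI, hne0, altSol_actual hYV] using this
  simp only [preSol_of_odd (show (2 * j + 1) % 2 = 1 by omega), Nat.add_sub_cancel,
    preSol_of_even (show 2 * j % 2 = 0 by omega), witI] at hpair
  by_cases hXW : 2 * j ∈ W <;> by_cases hYW : 2 * j + 1 ∈ W <;> simp_all

end ActualCausation

/-- each model in the sequence M₀, M₁, M₂, … is a conservative
extension of its predecessor; in context u₁, A = 1 is not an actual cause of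
B = 1 in M_{2n} but is an actual cause of B = 1 in M_{2n+1}. -/
theorem alternating_causality (n : ℕ) :
    ConsExt (Meven n) (Modd n) ∧ ConsExt (Modd n) (Meven (n + 1)) ∧
    ¬ IsCause (Meven n) (fun _ => 1) {0} (fun _ => 1) (.prim 1 1) ∧
    IsCause (Modd n) (fun _ => 1) {0} (fun _ => 1) (.prim 1 1) :=
  ⟨consExt_Meven_Modd n, consExt_Modd_Meven n, fun h => not_preCause_Meven n h.1, isCause_Modd n⟩
end

section
/- (No triple alternation.) Suppose M₂ is a conservative extension of the extended causal model M₁, M₃ is a conservative extension of M₂, X⃗ = x⃗ is an actual cause of φ in both (M₁, u⃗) and (M₃, u⃗) under the extended HP definition, (M₂, u⃗) respects the equations for all endogenous variables of M₂ not in M₁, and (M₃, u⃗) respects the equations for all endogenous variables of M₃ not in M₂. Then X⃗ = x⃗ is an actual cause of φ in (M₂, u⃗). -/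
open Classical

/-! Causes descend along a conservative extension `M ⊆ M'` whose new variables respect their
equations: a witness `(W, w, x')` in `M'` gives the witness `(W ∩ V, w, x')` in `M`. By AC2(a⁺)
the witness world is at least as normal as the actual world, so no new variable deviates from
its equation there and unclamping the new variables of `W` leaves that world unchanged; CE then
transfers AC2(a⁺), and AC1, AC2(a), AC2(b) transfer because `M` and `M'` agree on formulas over
the variables of `M` under interventions on those variables. Descending from `M₃` gives AC1 and
AC2 in `M₂`; a strictly smaller cause in `M₂` would descend to `M₁`, contradicting AC3 there. -/

theorem isSol_intervene_iff (M : CM) (I : ℕ → Option ℕ) (ctx v : ℕ → ℕ) :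
    IsSol (M.intervene I) ctx v ↔
      (∀ X ∈ M.V, v X = (I X).getD (M.F X ctx v)) ∧ ∀ X, X ∉ M.V → v X = 0 :=
  Iff.rfl

theorem doSet_of_mem {S : Finset ℕ} {Y : ℕ} (h : Y ∈ S) (f : ℕ → ℕ) :
    doSet S f Y = some (f Y) :=
  if_pos h

theorem doSet_of_notMem {S : Finset ℕ} {Y : ℕ} (h : Y ∉ S) (f : ℕ → ℕ) :
    doSet S f Y = none :=
  if_neg h

theorem witI_eq_doSet (Xs : Finset ℕ) (x' : ℕ → ℕ) (W : Finset ℕ) (w : ℕ → ℕ) :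
    witI Xs x' W w = doSet (Xs ∪ W) (fun Y => if Y ∈ Xs then x' Y else w Y) := by
  funext Y
  by_cases h1 : Y ∈ Xs <;> by_cases h2 : Y ∈ W <;> simp [witI, doSet, h1, h2]

theorem BForm.eval_congr (φ : BForm) {a b : ℕ → ℕ} (h : ∀ Y ∈ φ.vars, a Y = b Y) :
    φ.eval a ↔ φ.eval b := by
  induction φ with
  | prim X x => simp [BForm.eval, h X (by simp [BForm.vars])]
  | not ψ ih => exact not_congr (ih h)
  | and ψ χ ih₁ ih₂ =>
    exact and_congr (ih₁ fun Y hY => h Y (by simp [BForm.vars, hY]))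
      (ih₂ fun Y hY => h Y (by simp [BForm.vars, hY]))

theorem BForm.eval_indicator_iff {φ : BForm} {S : Finset ℕ} (hφ : φ.vars ⊆ S) (s : ℕ → ℕ) :
    φ.eval ((S : Set ℕ).indicator s) ↔ φ.eval s :=
  φ.eval_congr fun _ hY => Set.indicator_of_mem (Finset.mem_coe.2 (hφ hY)) s

theorem World.indicator_eq {M : CM} {s : ℕ → ℕ} (hs : World M s) :
    (M.V : Set ℕ).indicator s = s :=
  Set.indicator_eq_self.2 fun X hX => by_contra fun hXV => hX (hs X hXV)

noncomputable def CM.solOfRank (M : CM) (ord : ℕ → ℕ) (ctx : ℕ → ℕ) (X : ℕ) : ℕ :=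
  if X ∈ M.V then
    M.F X ctx (fun Y => if _ : ord Y < ord X then M.solOfRank ord ctx Y else 0)
  else 0
termination_by ord X

namespace Recursive

variable {M : CM}

theorem intervene (h : Recursive M) (I : ℕ → Option ℕ) : Recursive (M.intervene I) := by
  obtain ⟨ord, hinj, hdep⟩ := h
  exact ⟨ord, hinj, fun X hX ctx g g' hg => by simp only [CM.intervene, hdep X hX ctx g g' hg]⟩

theorem exists_isSol (h : Recursive M) (ctx : ℕ → ℕ) : ∃ v, IsSol M ctx v := by
  obtain ⟨ord, -, hdep⟩ := h
  refine ⟨M.solOfRank ord ctx, fun X hX => ?_, fun X hX => by rw [CM.solOfRank, if_neg hX]⟩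
  rw [CM.solOfRank, if_pos hX]
  exact hdep X hX ctx _ _ fun Y _ hlt => by simp [hlt]

theorem eq_of_isSol (h : Recursive M) {ctx v w : ℕ → ℕ}
    (hv : IsSol M ctx v) (hw : IsSol M ctx w) : v = w := by
  obtain ⟨ord, -, hdep⟩ := h
  have key : ∀ n, ∀ X ∈ M.V, ord X = n → v X = w X := by
    intro n
    induction n using Nat.strong_induction_on with
    | _ n ih =>
      intro X hX hord
      rw [hv.1 X hX, hw.1 X hX]
      exact hdep X hX ctx v w fun Y hY hlt => ih (ord Y) (hord ▸ hlt) Y hY rfl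
  funext X
  by_cases hX : X ∈ M.V
  · exact key (ord X) X hX rfl
  · rw [hv.2 X hX, hw.2 X hX]

theorem satF_iff (h : Recursive M) {ctx s : ℕ → ℕ} {I : ℕ → Option ℕ}
    (hs : IsSol (M.intervene I) ctx s) (φ : BForm) : SatF M ctx I φ ↔ φ.eval s :=
  ⟨fun hφ => hφ s hs, fun hφ _ hv => (h.intervene I).eq_of_isSol hv hs ▸ hφ⟩

end Recursive

theorem IsSol.intervene_doSet_self {M : CM} {I : ℕ → Option ℕ} {ctx s : ℕ → ℕ} {S : Finset ℕ}
    (hs : IsSol (M.intervene I) ctx s) (hS : ∀ Y ∈ M.V, Y ∉ S → I Y = none) :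
    IsSol (M.intervene (doSet S s)) ctx s := by
  obtain ⟨hsF, hs0⟩ := (isSol_intervene_iff ..).1 hs
  refine (isSol_intervene_iff ..).2 ⟨fun Y hY => ?_, hs0⟩
  by_cases hYS : Y ∈ S
  · rw [doSet_of_mem hYS, Option.getD_some]
  · simpa [doSet_of_notMem hYS, hS Y hY hYS] using hsF Y hY

theorem IsSol.eq_indicator_of_doSet_erase {M : CM} {ctx s v : ℕ → ℕ} {X : ℕ}
    (hv : IsSol (M.intervene (doSet (M.V.erase X) s)) ctx v) (hX : v X = s X) :
    v = (M.V : Set ℕ).indicator s := by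
  obtain ⟨hvF, hv0⟩ := (isSol_intervene_iff ..).1 hv
  funext Y
  by_cases hY : Y ∈ M.V
  · rw [Set.indicator_of_mem (Finset.mem_coe.2 hY)]
    by_cases hYX : Y = X
    · exact hYX ▸ hX
    · simpa [doSet_of_mem (Finset.mem_erase.2 ⟨hYX, hY⟩)] using hvF Y hY
  · rw [Set.indicator_of_notMem (by simpa using hY), hv0 Y hY]

theorem IsSol.witI_inter {M : CM} {ctx s x' w : ℕ → ℕ} {Xs W S : Finset ℕ}
    (hs : IsSol (M.intervene (witI Xs x' W w)) ctx s)
    (heq : ∀ Y ∈ M.V, Y ∉ S → s Y = M.F Y ctx s) :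
    IsSol (M.intervene (witI Xs x' (W ∩ S) w)) ctx s := by
  obtain ⟨hsF, hs0⟩ := (isSol_intervene_iff ..).1 hs
  refine (isSol_intervene_iff ..).2 ⟨fun Y hY => ?_, hs0⟩
  by_cases h1 : Y ∈ Xs
  · simpa [witI, h1] using hsF Y hY
  by_cases h2 : Y ∈ S
  · simpa [witI, h1, h2] using hsF Y hY
  · simpa [witI, h1, h2] using heq Y hY h2

theorem Respects.eq_F {M : ECM} {ctx s su : ℕ → ℕ} {v0 : ℕ} (hr : Respects M ctx v0)
    (hv0 : v0 ∈ M.V) (hs : World M.toCM s) (hsu : IsSol M.toCM ctx su) (hn : M.normGE s su) :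
    s v0 = M.F v0 ctx s := by
  have hdev : ¬ Deviates M.toCM ctx v0 s := fun hdev => hr s hs hdev su hsu hn
  obtain ⟨v, hv, hvv0⟩ : ∃ v, IsSol (M.intervene (doSet (M.V.erase v0) s)) ctx v ∧
      v v0 = s v0 := by
    simpa [Deviates] using hdev
  have hvs : v = s := (hv.eq_indicator_of_doSet_erase hvv0).trans hs.indicator_eq
  simpa [doSet_of_notMem (Finset.notMem_erase v0 _), hvs] using
    ((isSol_intervene_iff ..).1 hv).1 v0 hv0

namespace ConsExt

variable {M M' : CM} {ctx : ℕ → ℕ}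

theorem isSol_indicator (hext : ConsExt M M') (hM : Recursive M) (hM' : Recursive M')
    {I : ℕ → Option ℕ} (hI : ∀ Y ∉ M.V, I Y = none) {s' : ℕ → ℕ}
    (hs' : IsSol (M'.intervene I) ctx s') :
    IsSol (M.intervene I) ctx ((M.V : Set ℕ).indicator s') := by
  obtain ⟨hs'F, -⟩ := (isSol_intervene_iff ..).1 hs'
  refine (isSol_intervene_iff ..).2
    ⟨fun X hX => ?_, fun X hX => Set.indicator_of_notMem (by simpa using hX) _⟩
  rw [Set.indicator_of_mem (Finset.mem_coe.2 hX)]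
  cases hIX : I X with
  | some a => simpa [hIX] using hs'F X (hext.1 hX)
  | none =>
    have hclamp : IsSol (M'.intervene (doSet (M.V.erase X) s')) ctx s' :=
      hs'.intervene_doSet_self fun Y _ hY => if hYX : Y = X then hYX ▸ hIX else
        hI Y fun hYM => hY (Finset.mem_erase.2 ⟨hYX, hYM⟩)
    -- conservativity, with the other variables of `M` clamped to their values in `s'`
    have hsat : Sat M ctx (doSet (M.V.erase X) s') X (s' X) :=
      (hext.2 ctx (s' X) X hX s').2 fun v hv => by
        rw [(hM'.intervene _).eq_of_isSol hv hclamp]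
    obtain ⟨t, ht⟩ := (hM.intervene (doSet (M.V.erase X) s')).exists_isSol ctx
    have htX : t X = s' X := hsat t ht
    have hteq : t = (M.V : Set ℕ).indicator s' := ht.eq_indicator_of_doSet_erase htX
    have htF := ((isSol_intervene_iff ..).1 ht).1 X hX
    rw [doSet_of_notMem (Finset.notMem_erase X _), Option.getD_none, htX] at htF
    rw [htF, hteq, Option.getD_none]

theorem satF_iff (hext : ConsExt M M') (hM : Recursive M) (hM' : Recursive M')
    {I : ℕ → Option ℕ} (hI : ∀ Y ∉ M.V, I Y = none) {φ : BForm} (hφ : φ.vars ⊆ M.V) :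
    SatF M ctx I φ ↔ SatF M' ctx I φ := by
  obtain ⟨s', hs'⟩ := (hM'.intervene I).exists_isSol ctx
  rw [hM.satF_iff (hext.isSol_indicator hM hM' hI hs'), hM'.satF_iff hs',
    BForm.eval_indicator_iff hφ]

theorem isSol_indicator_of_isSol (hext : ConsExt M M') (hM : Recursive M)
    (hM' : Recursive M') {s' : ℕ → ℕ} (hs' : IsSol M' ctx s') :
    IsSol M ctx ((M.V : Set ℕ).indicator s') :=
  hext.isSol_indicator hM hM' (I := fun _ => none) (fun _ _ => rfl) hs'

variable {Xs : Finset ℕ} {xv : ℕ → ℕ} {φ : BForm}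

theorem ac1 (hext : ConsExt M M') (hM : Recursive M) (hM' : Recursive M')
    (hXs : Xs ⊆ M.V) (hφ : φ.vars ⊆ M.V) (h : AC1 M' ctx Xs xv φ) : AC1 M ctx Xs xv φ := by
  obtain ⟨s', hs'⟩ := hM'.exists_isSol ctx
  have hs := hext.isSol_indicator_of_isSol hM hM' hs'
  obtain ⟨hXs', hφs'⟩ := h s' hs'
  intro v hv
  rw [hM.eq_of_isSol hv hs, BForm.eval_indicator_iff hφ]
  exact ⟨fun X hX => by rw [Set.indicator_of_mem (hXs hX)]; exact hXs' X hX, hφs'⟩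

theorem acb_inter (hext : ConsExt M M') (hM : Recursive M) (hM' : Recursive M')
    (hXs : Xs ⊆ M.V) (hφ : φ.vars ⊆ M.V) {W : Finset ℕ} {w : ℕ → ℕ}
    (h : ∀ vs, IsSol M' ctx vs → ∀ W' ⊆ W, ∀ Z' ⊆ M'.V \ W,
      SatF M' ctx (acbI Xs xv Z' vs W' w) φ) :
    ∀ vs, IsSol M ctx vs → ∀ W' ⊆ W ∩ M.V, ∀ Z' ⊆ M.V \ (W ∩ M.V),
      SatF M ctx (acbI Xs xv Z' vs W' w) φ := by
  intro vs hvs W' hW' Z' hZ'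
  obtain ⟨s', hs'⟩ := hM'.exists_isSol ctx
  have hvs' := hM.eq_of_isSol hvs (hext.isSol_indicator_of_isSol hM hM' hs')
  have hZ'M : Z' ⊆ M.V := fun Y hY => (Finset.mem_sdiff.1 (hZ' hY)).1
  have hI : acbI Xs xv Z' vs W' w = acbI Xs xv Z' s' W' w := by
    funext Y
    by_cases h1 : Y ∈ Xs
    · simp [acbI, h1]
    by_cases h2 : Y ∈ Z'
    · simp [acbI, h1, h2, hvs', Set.indicator_of_mem (hZ'M h2)]
    · simp [acbI, h1, h2]
  have hsupp : ∀ Y ∉ M.V, acbI Xs xv Z' s' W' w Y = none := fun Y hY => by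
    simp [acbI, show Y ∉ Xs from fun h => hY (hXs h), show Y ∉ Z' from fun h => hY (hZ'M h),
      show Y ∉ W' from fun h => hY (Finset.mem_inter.1 (hW' h)).2]
  rw [hI, hext.satF_iff hM hM' hsupp hφ]
  refine h s' hs' W' (hW'.trans Finset.inter_subset_left) Z' fun Y hY => ?_
  obtain ⟨hYM, hYW⟩ := Finset.mem_sdiff.1 (hZ' hY)
  exact Finset.mem_sdiff.2 ⟨hext.1 hYM, fun h => hYW (Finset.mem_inter.2 ⟨h, hYM⟩)⟩

end ConsExt

theorem EPreCause.of_eConsExt {M M' : ECM} (hext : EConsExt M M')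
    (hM : Recursive M.toCM) (hM' : Recursive M'.toCM) {ctx : ℕ → ℕ} {Xs : Finset ℕ}
    (hXs : Xs ⊆ M.V) {xv : ℕ → ℕ} {φ : BForm} (hφ : φ.vars ⊆ M.V)
    (hr : ∀ v0 ∈ M'.V \ M.V, Respects M' ctx v0) (h : EPreCause M' ctx Xs xv φ) :
    EPreCause M ctx Xs xv φ := by
  obtain ⟨hAC1, W, w, x', ⟨-, hXsW, hnφ, hacb⟩, hnorm⟩ := h
  obtain ⟨su, hsu⟩ := hM'.exists_isSol ctx
  obtain ⟨s, hs⟩ := (hM'.intervene (witI Xs x' W w)).exists_isSol ctx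
  have hs' : IsSol (M'.intervene (witI Xs x' (W ∩ M.V) w)) ctx s :=
    hs.witI_inter fun Y hY hYM =>
      (hr Y (Finset.mem_sdiff.2 ⟨hY, hYM⟩)).eq_F hY hs.2 hsu (hnorm s su hs hsu)
  have hnorm' : NormAbove M' ctx (witI Xs x' (W ∩ M.V) w) := fun t su ht hsu =>
    (hM'.intervene _).eq_of_isSol ht hs' ▸ hnorm s su hs hsu
  have hsupp : ∀ Y ∉ M.V, witI Xs x' (W ∩ M.V) w Y = none := fun Y hY => by
    simp [witI, hY, show Y ∉ Xs from fun h => hY (hXs h)]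
  refine ⟨hext.1.ac1 hM hM' hXs hφ hAC1, W ∩ M.V, w, x',
    ⟨Finset.inter_subset_right, fun X hX => ?_, ?_, hext.1.acb_inter hM hM' hXs hφ hacb⟩, ?_⟩
  · exact Finset.mem_sdiff.2
      ⟨hXs hX, fun hXW => (Finset.mem_sdiff.1 (hXsW hX)).2 (Finset.mem_inter.1 hXW).1⟩
  · exact (hext.1.satF_iff hM hM' hsupp (by simpa [BForm.vars] using hφ)).2
      ((hM'.satF_iff hs' _).2 (hnφ s hs))
  · rw [witI_eq_doSet] at hnorm' ⊢
    exact (hext.2 ctx _ (Finset.union_subset hXs Finset.inter_subset_right) _).2 hnorm'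

/-- no triple alternation: if X⃗ = x⃗ is a cause in M₁ and in M₃,
where M₂ conservatively extends M₁ and M₃ conservatively extends M₂ (with the
respecting-the-equations hypotheses), then X⃗ = x⃗ is also a cause in M₂. -/
theorem no_triple_alternation (M1 M2 M3 : ECM)
    (h1 : Recursive M1.toCM) (h2 : Recursive M2.toCM) (h3 : Recursive M3.toCM)
    (h12 : EConsExt M1 M2) (h23 : EConsExt M2 M3)
    (ctx : ℕ → ℕ) (Xs : Finset ℕ) (hXs : Xs ⊆ M1.V)
    (xv : ℕ → ℕ) (φ : BForm) (hφ : φ.vars ⊆ M1.V)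
    (hc1 : EIsCause M1 ctx Xs xv φ) (hc3 : EIsCause M3 ctx Xs xv φ)
    (hr2 : ∀ v0 ∈ M2.V \ M1.V, Respects M2 ctx v0)
    (hr3 : ∀ v0 ∈ M3.V \ M2.V, Respects M3 ctx v0) :
    EIsCause M2 ctx Xs xv φ :=
  ⟨hc3.1.of_eConsExt h23 h2 h3 (hXs.trans h12.1.1) (hφ.trans h12.1.1) hr3,
    fun Xs' hXs' hpc =>
      hc1.2 Xs' hXs' (hpc.of_eConsExt h12 h1 h2 (hXs'.subset.trans hXs) hφ hr2)⟩
end
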